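/- Let R be the right-rotation relation on full binary trees: t R t′ if t′ is obtained from t by replacing some subtree of the form (w₁ * w₂) * w₃ by w₁ * (w₂ * w₃), and let ≼ be the reflexive-transitive closure of R. Then ≼ is antisymmetric: if t ≼ t′ and t′ ≼ t then t = t′. Hence ≼ is a partial order on full binary trees (and on the set Br_n of full binary trees with n leaves, for each n). -/

import Mathlib

/-!
A right rotation at `(w₁ * w₂) * w₃` strictly increases the potential `rightLeafSum`, the sum over
all internal nodes of the number of leaves of their right subtree: the node on top gains the
`numLeaves w₂` leaves of its new right subtree, the demoted node loses `numLeaves w₂` and gains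
`numLeaves w₃ > 0`, and no other node sees its right subtree change size. So a nontrivial chain of
rotations can never return to its start.
-/

/-- Full binary trees: a leaf, or a node with two full binary subtrees. -/
inductive FullBinTree : Type
  | leaf : FullBinTree
  | node : FullBinTree → FullBinTree → FullBinTree

namespace FullBinTree

/-- One right rotation: replace some subtree `(w₁ * w₂) * w₃` by `w₁ * (w₂ * w₃)`. -/
inductive Rot : FullBinTree → FullBinTree → Prop
  | rot (w₁ w₂ w₃ : FullBinTree) : Rot (node (node w₁ w₂) w₃) (node w₁ (node w₂ w₃))
  | left {u u' : FullBinTree} (v : FullBinTree) : Rot u u' → Rot (node u v) (node u' v)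
  | right (u : FullBinTree) {v v' : FullBinTree} : Rot v v' → Rot (node u v) (node u v')

def numLeaves : FullBinTree → ℕ
  | leaf => 1
  | node u v => numLeaves u + numLeaves v

def rightLeafSum : FullBinTree → ℕ
  | leaf => 0
  | node u v => rightLeafSum u + rightLeafSum v + numLeaves v

theorem numLeaves_pos : ∀ t : FullBinTree, 0 < numLeaves t
  | leaf => Nat.one_pos
  | node u _ => Nat.add_pos_left (numLeaves_pos u) _

theorem Rot.numLeaves_eq {t t' : FullBinTree} (h : Rot t t') : numLeaves t = numLeaves t' := by
  induction h with
  | rot w₁ w₂ w₃ => simp only [numLeaves]; omega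
  | left v _ ih => simp only [numLeaves, ih]
  | right u _ ih => simp only [numLeaves, ih]

theorem Rot.rightLeafSum_lt {t t' : FullBinTree} (h : Rot t t') :
    rightLeafSum t < rightLeafSum t' := by
  induction h with
  | rot w₁ w₂ w₃ =>
    have := numLeaves_pos w₃
    simp only [rightLeafSum, numLeaves]
    omega
  | left v _ ih => simp only [rightLeafSum]; omega
  | right u h ih => simp only [rightLeafSum, h.numLeaves_eq]; omega

theorem rightLeafSum_lt_of_transGen {t t' : FullBinTree} (h : Relation.TransGen Rot t t') :
    rightLeafSum t < rightLeafSum t' := by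
  induction h with
  | single h => exact h.rightLeafSum_lt
  | tail _ h ih => exact ih.trans h.rightLeafSum_lt

end FullBinTree

open FullBinTree in
/-- The reflexive-transitive closure of right rotation (the Tamari order) is
antisymmetric, hence a partial order on full binary trees. -/
theorem tamari_antisymm (t t' : FullBinTree)
    (h : Relation.ReflTransGen Rot t t') (h' : Relation.ReflTransGen Rot t' t) :
    t = t' := by
  rcases Relation.reflTransGen_iff_eq_or_transGen.mp h with rfl | h
  · rfl
  · exact absurd (rightLeafSum_lt_of_transGen (h.trans_left h')) (lt_irrefl _)
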